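/- There is an absolute constant C > 0 such that for every L ≥ 1, every positive integer N with Δx = L/N ≤ 1, every γ > 0, and all grid points x, y ∈ 𝒳 = {iΔx : i = 0,…,N−1}, the second-order difference of the exponential weight satisfies | (𝒟⁺𝒟⁻ e^{−γ d_L(·,y)})(x) | = | ( e^{−γ d_L(x+Δx,y)} − 2 e^{−γ d_L(x,y)} + e^{−γ d_L(x−Δx,y)} ) / Δx² | ≤ C (γ² + 2γ) e^{γ Δx} e^{−γ d_L(x,y)}. -/

import Mathlib

/-!
`d_L(x, y) = F(d̃_L(x - y))` for the even profile `F(r) = d_max - √((d_max - √(r² + 1))² + 1)`,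
which is 1-Lipschitz with a 2-Lipschitz derivative vanishing at `r = L/2`, exactly where `d̃_L`
has its kink. Hence `d = d_L(·, y)` is 1-Lipschitz and its second differences are `O(Δx²)`.
Writing `e^{-γ d(x ± Δx)} = e^{-γ d(x)} e^{-γ a±}` with `|a±| ≤ Δx` and `|a₊ + a₋| ≤ 8 Δx²`,
the bound `|eˢ - 1 - s| ≤ s² e^{|s|}` gives `|e^{-γ a₊} + e^{-γ a₋} - 2| ≤ 2 γ² Δx² e^{γ Δx} + 8 γ Δx²`.
-/

open scoped BigOperators Real
open MeasureTheory

noncomputable section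

/-- The periodic distance `min_{k ∈ ℤ} |x - L k|`. -/
def dtilde (L x : ℝ) : ℝ := sInf {r : ℝ | ∃ k : ℤ, r = |x - L * k|}

/-- The mollified periodic distance `d_L(x, 0)`. -/
def dmol (L x : ℝ) : ℝ :=
  Real.sqrt (L ^ 2 / 4 + 1) -
    Real.sqrt ((Real.sqrt (L ^ 2 / 4 + 1) - Real.sqrt (dtilde L x ^ 2 + 1)) ^ 2 + 1)

/-- The mollified periodic distance `d_L(x, y)`. -/
def dL (L x y : ℝ) : ℝ := dmol L (x - y)

/-- The grid point `x_i = i Δx`, with `Δx = L / N`. -/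
def gridX (L : ℝ) (N : ℕ) (i : ZMod N) : ℝ := (ZMod.val i : ℝ) * (L / N)

/-- Forward difference operator on periodic lattice functions. -/
def Dplus {N : ℕ} (dx : ℝ) (f : ZMod N → ℂ) : ZMod N → ℂ :=
  fun i => (f (i + 1) - f i) / (dx : ℂ)

/-- Backward difference operator on periodic lattice functions. -/
def Dminus {N : ℕ} (dx : ℝ) (f : ZMod N → ℂ) : ZMod N → ℂ :=
  fun i => (f i - f (i - 1)) / (dx : ℂ)

/-- Second order finite difference Laplacian `Δ = 𝒟⁺𝒟⁻`. -/
def discLap {N : ℕ} (dx : ℝ) (f : ZMod N → ℂ) : ZMod N → ℂ :=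
  Dplus dx (Dminus dx f)

/-- Weighted `ℓ²` norm `(w Σ |f i|²)^{1/2}`; with `w = Δx` this is `‖·‖_{L²(𝒳)}`,
with `w = Δk` this is `‖·‖_{L²(𝒦)}`. -/
def wnorm {N : ℕ} [NeZero N] (w : ℝ) (f : ZMod N → ℂ) : ℝ :=
  Real.sqrt (w * ∑ i : ZMod N, ‖f i‖ ^ 2)

/-- The Fourier grid point `k = n Δk` with `n ∈ (-N/2, N/2]` corresponding to `j ∈ ZMod N`. -/
def kval (L : ℝ) (N : ℕ) (j : ZMod N) : ℝ :=
  ((if (ZMod.val j : ℤ) ≤ (N : ℤ) / 2 then (ZMod.val j : ℤ) else (ZMod.val j : ℤ) - (N : ℤ)) : ℝ) *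
    (2 * Real.pi / L)

/-- Discrete Fourier transform `f̂_k = Δx Σ_x e^{-i k x} f(x)`. -/
def dft (L : ℝ) {N : ℕ} [NeZero N] (f : ZMod N → ℂ) (j : ZMod N) : ℂ :=
  ((L / N : ℝ) : ℂ) *
    ∑ i : ZMod N, Complex.exp (-Complex.I * (kval L N j : ℂ) * ((gridX L N i : ℝ) : ℂ)) * f i

/-- Inverse discrete Fourier transform `f(x) = (1/L) Σ_k e^{i k x} f̂_k`. -/
def idft (L : ℝ) {N : ℕ} [NeZero N] (fh : ZMod N → ℂ) (i : ZMod N) : ℂ :=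
  ((1 / L : ℝ) : ℂ) *
    ∑ j : ZMod N, Complex.exp (Complex.I * (kval L N j : ℂ) * ((gridX L N i : ℝ) : ℂ)) * fh j

/-- Periodic difference operator on the Fourier grid, `(𝒟 f̂)_k = (f̂_k - f̂_{k-Δk})/Δk`. -/
def Dk {N : ℕ} (dk : ℝ) (fh : ZMod N → ℂ) : ZMod N → ℂ :=
  fun j => (fh j - fh (j - 1)) / (dk : ℂ)

/-- Real-valued version of the periodic difference operator on the Fourier grid. -/
def DkR {N : ℕ} (dk : ℝ) (fh : ZMod N → ℝ) : ZMod N → ℝ :=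
  fun j => (fh j - fh (j - 1)) / dk

/-- The distance `d(x,0)`: equal to `x` on `[0, L/2)` and `L - x` on `[L/2, L)`. -/
def dfun (L x : ℝ) : ℝ := if x < L / 2 then x else L - x

/-- The mollified symbol `ĥ_k = θ̂(k)(k² - k_c²) + k_c²` on the Fourier grid, `k_c = π N / L`. -/
def hsym (L : ℝ) (N : ℕ) (θ : ℝ → ℝ) (j : ZMod N) : ℝ :=
  θ (kval L N j) * ((kval L N j) ^ 2 - (Real.pi * N / L) ^ 2) + (Real.pi * N / L) ^ 2

/-- The Fourier space Hamiltonian matrix `Ĥ_{kl} = ĥ_k δ_{kl} + (1/L) V̂_{k-l}`. -/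
def Hmat (L : ℝ) {N : ℕ} [NeZero N] (hh : ZMod N → ℝ) (V : ZMod N → ℝ) :
    Matrix (ZMod N) (ZMod N) ℂ :=
  Matrix.of fun k l =>
    (if k = l then (hh k : ℂ) else 0) + ((1 / L : ℝ) : ℂ) * dft L (fun i => (V i : ℂ)) (k - l)

end

open Set Function Real
open scoped NNReal

theorem lipschitzWith_of_hasDerivAt_of_abs_le {f f' : ℝ → ℝ} {C : ℝ≥0}
    (hf : ∀ x, HasDerivAt f (f' x) x) (bound : ∀ x, |f' x| ≤ C) : LipschitzWith C f :=
  lipschitzOnWith_univ.1 <| convex_univ.lipschitzOnWith_of_nnnorm_hasDerivWithin_le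
    (fun x _ => (hf x).hasDerivWithinAt) fun x _ => by
      rw [← NNReal.coe_le_coe, coe_nnnorm, Real.norm_eq_abs]
      exact bound x

theorem LipschitzWith.abs_sub_le {f : ℝ → ℝ} {K : ℝ≥0} (hf : LipschitzWith K f) (x y : ℝ) :
    |f x - f y| ≤ K * |x - y| := by
  simpa only [Real.dist_eq] using hf.dist_le_mul x y

theorem abs_sub_sub_mul_le_of_hasDerivAt {f f' : ℝ → ℝ} {a b M : ℝ}
    (hf : ∀ x ∈ uIcc a b, HasDerivAt f (f' x) x) (hM : ∀ x ∈ uIcc a b, |f' x - f' a| ≤ M) :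
    |f b - f a - (b - a) * f' a| ≤ M * |b - a| := by
  have h := (convex_uIcc a b).norm_image_sub_le_of_norm_hasDerivWithin_le
    (f := fun x => f x - x * f' a) (f' := fun x => f' x - f' a)
    (fun x hx => ((hf x hx).sub (hasDerivAt_mul_const (f' a))).hasDerivWithinAt) hM
    left_mem_uIcc right_mem_uIcc
  simp only [Real.norm_eq_abs] at h
  convert h using 2
  ring

theorem abs_sub_sub_mul_le_of_lipschitzWith {f f' : ℝ → ℝ} {K : ℝ≥0}
    (hf : ∀ x, HasDerivAt f (f' x) x) (hf' : LipschitzWith K f') (a u : ℝ) :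
    |f (a + u) - f a - u * f' a| ≤ K * u ^ 2 := by
  have h := abs_sub_sub_mul_le_of_hasDerivAt (b := a + u) (M := K * |u|) (fun x _ => hf x)
    fun x hx => (hf'.abs_sub_le x a).trans <|
      mul_le_mul_of_nonneg_left (by simpa using abs_sub_left_of_mem_uIcc hx) K.coe_nonneg
  simpa [mul_assoc, ← sq] using h

theorem abs_second_diff_le_of_lipschitzWith {f f' : ℝ → ℝ} {K : ℝ≥0}
    (hf : ∀ x, HasDerivAt f (f' x) x) (hf' : LipschitzWith K f') (t h : ℝ) :
    |f (t + h) - 2 * f t + f (t - h)| ≤ 2 * K * h ^ 2 := by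
  have h₁ := abs_sub_sub_mul_le_of_lipschitzWith hf hf' t h
  have h₂ := abs_sub_sub_mul_le_of_lipschitzWith hf hf' t (-h)
  rw [← sub_eq_add_neg, neg_sq] at h₂
  calc |f (t + h) - 2 * f t + f (t - h)|
      = |(f (t + h) - f t - h * f' t) + (f (t - h) - f t - -h * f' t)| := by ring_nf
    _ ≤ 2 * K * h ^ 2 := (abs_add_le _ _).trans (by linarith)

theorem abs_sub_reflect_le_of_lipschitzWith {f f' : ℝ → ℝ} {K : ℝ≥0}
    (hf : ∀ x, HasDerivAt f (f' x) x) (hf' : LipschitzWith K f') {c : ℝ} (hc : f' c = 0)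
    (u : ℝ) : |f (c + u) - f (c - u)| ≤ 2 * K * u ^ 2 := by
  have h₁ := abs_sub_sub_mul_le_of_lipschitzWith hf hf' c u
  have h₂ := abs_sub_sub_mul_le_of_lipschitzWith hf hf' c (-u)
  rw [← sub_eq_add_neg, neg_sq, hc, mul_zero, sub_zero] at h₂
  rw [hc, mul_zero, sub_zero] at h₁
  calc |f (c + u) - f (c - u)| = |(f (c + u) - f c) - (f (c - u) - f c)| := by ring_nf
    _ ≤ 2 * K * u ^ 2 := (abs_sub _ _).trans (by linarith)

theorem Function.Periodic.exists_mem_Icc_half {α : Type*} {f : ℝ → α} {c : ℝ}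
    (hf : Periodic f c) (heven : Function.Even f) (hc : 0 < c) (x : ℝ) :
    ∃ y ∈ Icc 0 (c / 2), f x = f y := by
  obtain ⟨y, ⟨hy0, hyc⟩, hxy⟩ := hf.exists_mem_Ico₀ hc x
  rcases le_or_gt y (c / 2) with hy | hy
  · exact ⟨y, ⟨hy0, hy⟩, hxy⟩
  · refine ⟨c - y, ⟨by linarith, by linarith⟩, ?_⟩
    rw [hxy, ← heven y, ← hf (-y), neg_add_eq_sub]

theorem abs_exp_sub_one_le_mul_exp_abs (x : ℝ) : |exp x - 1| ≤ |x| * exp |x| := by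
  have h₁ := add_one_le_exp x
  have h₂ := add_one_le_exp (-x)
  have h₃ : exp (-x) * exp x = 1 := by rw [← exp_add, neg_add_cancel, exp_zero]
  rcases le_or_gt 0 x with hx | hx
  · rw [abs_of_nonneg hx, abs_of_nonneg (by linarith)]
    nlinarith [exp_pos x]
  · rw [abs_of_neg hx, abs_of_nonpos (by linarith [exp_lt_one_iff.2 hx])]
    nlinarith [one_le_exp (neg_nonneg.2 hx.le)]

theorem abs_exp_sub_one_sub_le (x : ℝ) : |exp x - 1 - x| ≤ x ^ 2 * exp |x| := by
  have h := abs_sub_sub_mul_le_of_hasDerivAt (a := 0) (b := x) (M := |x| * exp |x|)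
    (fun y _ => hasDerivAt_exp y) fun y hy => by
      have hyx : |y| ≤ |x| := by simpa using abs_sub_left_of_mem_uIcc hy
      rw [exp_zero]
      exact (abs_exp_sub_one_le_mul_exp_abs y).trans
        (mul_le_mul hyx (exp_le_exp.2 hyx) (exp_pos _).le (abs_nonneg x))
  simp only [exp_zero, sub_zero, mul_one] at h
  calc |exp x - 1 - x| ≤ |x| * exp |x| * |x| := h
    _ = x ^ 2 * exp |x| := by rw [mul_right_comm, abs_mul_abs_self, sq]

theorem abs_exp_add_exp_sub_two_le {x y r : ℝ} (hx : |x| ≤ r) (hy : |y| ≤ r) :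
    |exp x + exp y - 2| ≤ 2 * r ^ 2 * exp r + |x + y| := by
  have bound : ∀ z : ℝ, |z| ≤ r → |exp z - 1 - z| ≤ r ^ 2 * exp r := fun z hz =>
    (abs_exp_sub_one_sub_le z).trans <| mul_le_mul (sq_le_sq' (abs_le.1 hz).1 (abs_le.1 hz).2)
      (exp_le_exp.2 hz) (exp_pos _).le (sq_nonneg r)
  calc |exp x + exp y - 2| = |(exp x - 1 - x) + (exp y - 1 - y) + (x + y)| := by ring_nf
    _ ≤ |exp x - 1 - x| + |exp y - 1 - y| + |x + y| := abs_add_three _ _ _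
    _ ≤ 2 * r ^ 2 * exp r + |x + y| := by linarith [bound x hx, bound y hy]

theorem abs_exp_second_diff_le {d : ℝ → ℝ} (hd : LipschitzWith 1 d) {γ δ K t : ℝ}
    (hγ : 0 ≤ γ) (hδ : 0 < δ) (h2 : |d (t + δ) - 2 * d t + d (t - δ)| ≤ K * δ ^ 2) :
    |(exp (-γ * d (t + δ)) - 2 * exp (-γ * d t) + exp (-γ * d (t - δ))) / δ ^ 2| ≤
      (2 * γ ^ 2 * exp (γ * δ) + γ * K) * exp (-γ * d t) := by
  have step : ∀ s, |s - t| = δ → |-γ * (d s - d t)| ≤ γ * δ := fun s hs => by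
    rw [abs_mul, abs_neg, abs_of_nonneg hγ, ← hs]
    simpa using mul_le_mul_of_nonneg_left (hd.abs_sub_le s t) hγ
  have hsum := abs_exp_add_exp_sub_two_le (step (t + δ) (by simp [abs_of_pos hδ]))
    (step (t - δ) (by simp [abs_of_pos hδ]))
  have hlin : |-γ * (d (t + δ) - d t) + -γ * (d (t - δ) - d t)| ≤ γ * (K * δ ^ 2) := by
    rw [← mul_add, abs_mul, abs_neg, abs_of_nonneg hγ,
      show d (t + δ) - d t + (d (t - δ) - d t) = d (t + δ) - 2 * d t + d (t - δ) by ring]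
    exact mul_le_mul_of_nonneg_left h2 hγ
  have hnum : exp (-γ * d (t + δ)) - 2 * exp (-γ * d t) + exp (-γ * d (t - δ)) =
      exp (-γ * d t) *
        (exp (-γ * (d (t + δ) - d t)) + exp (-γ * (d (t - δ) - d t)) - 2) := by
    rw [mul_sub, mul_add, ← exp_add, ← exp_add]
    ring_nf
  rw [hnum, abs_div, abs_mul, abs_of_pos (exp_pos _), abs_of_pos (pow_pos hδ 2),
    div_le_iff₀ (pow_pos hδ 2)]
  calc exp (-γ * d t) * |exp (-γ * (d (t + δ) - d t)) + exp (-γ * (d (t - δ) - d t)) - 2|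
      ≤ exp (-γ * d t) * (2 * (γ * δ) ^ 2 * exp (γ * δ) + γ * (K * δ ^ 2)) :=
        mul_le_mul_of_nonneg_left (hsum.trans (by linarith)) (exp_pos _).le
    _ = (2 * γ ^ 2 * exp (γ * δ) + γ * K) * exp (-γ * d t) * δ ^ 2 := by ring

noncomputable def sqrtSqAddOneDeriv (r : ℝ) : ℝ := r / √(r ^ 2 + 1)

noncomputable def dmolProfile (m r : ℝ) : ℝ := m - √((m - √(r ^ 2 + 1)) ^ 2 + 1)

noncomputable def dmolProfileDeriv (m r : ℝ) : ℝ :=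
  sqrtSqAddOneDeriv (m - √(r ^ 2 + 1)) * sqrtSqAddOneDeriv r

theorem one_le_sqrt_sq_add_one (r : ℝ) : 1 ≤ √(r ^ 2 + 1) :=
  Real.one_le_sqrt.2 (by nlinarith)

theorem hasDerivAt_sqrt_sq_add_one (r : ℝ) :
    HasDerivAt (fun x => √(x ^ 2 + 1)) (sqrtSqAddOneDeriv r) r := by
  have h := ((hasDerivAt_pow 2 r).add_const 1).sqrt (by positivity)
  convert h using 1
  have := one_le_sqrt_sq_add_one r
  rw [sqrtSqAddOneDeriv]
  field_simp
  ring

theorem abs_sqrtSqAddOneDeriv_le_one (r : ℝ) : |sqrtSqAddOneDeriv r| ≤ 1 := by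
  have h : |r| ≤ √(r ^ 2 + 1) := by
    rw [← Real.sqrt_sq_eq_abs]
    exact Real.sqrt_le_sqrt (by linarith)
  have hpos : 0 < √(r ^ 2 + 1) := by linarith [one_le_sqrt_sq_add_one r]
  rw [sqrtSqAddOneDeriv, abs_div, abs_of_pos hpos, div_le_one hpos]
  exact h

theorem hasDerivAt_sqrtSqAddOneDeriv (r : ℝ) :
    HasDerivAt sqrtSqAddOneDeriv (1 / √(r ^ 2 + 1) ^ 3) r := by
  have hs := one_le_sqrt_sq_add_one r
  refine ((hasDerivAt_id' r).fun_div (hasDerivAt_sqrt_sq_add_one r) (by positivity)).congr_deriv ?_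
  have hsq : √(r ^ 2 + 1) ^ 2 = r ^ 2 + 1 := Real.sq_sqrt (by positivity)
  rw [sqrtSqAddOneDeriv]
  field_simp
  nlinarith

theorem lipschitzWith_sqrt_sq_add_one : LipschitzWith 1 fun r : ℝ => √(r ^ 2 + 1) :=
  lipschitzWith_of_hasDerivAt_of_abs_le hasDerivAt_sqrt_sq_add_one abs_sqrtSqAddOneDeriv_le_one

theorem lipschitzWith_sqrtSqAddOneDeriv : LipschitzWith 1 sqrtSqAddOneDeriv :=
  lipschitzWith_of_hasDerivAt_of_abs_le hasDerivAt_sqrtSqAddOneDeriv fun r => by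
    have hs := one_le_sqrt_sq_add_one r
    rw [abs_of_pos (by positivity), NNReal.coe_one, div_le_one (by positivity)]
    exact one_le_pow₀ hs

theorem hasDerivAt_dmolProfile (m r : ℝ) :
    HasDerivAt (dmolProfile m) (dmolProfileDeriv m r) r := by
  have hs := one_le_sqrt_sq_add_one (m - √(r ^ 2 + 1))
  refine ((((hasDerivAt_sqrt_sq_add_one r).const_sub m).fun_pow 2).add_const 1).sqrt
    (by positivity) |>.const_sub m |>.congr_deriv ?_
  simp only [dmolProfileDeriv, sqrtSqAddOneDeriv]
  field_simp
  ring

theorem dmolProfile_neg (m r : ℝ) : dmolProfile m (-r) = dmolProfile m r := by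
  rw [dmolProfile, dmolProfile, neg_sq]

theorem abs_dmolProfileDeriv_le_one (m r : ℝ) : |dmolProfileDeriv m r| ≤ 1 := by
  rw [dmolProfileDeriv, abs_mul]
  exact mul_le_one₀ (abs_sqrtSqAddOneDeriv_le_one _) (abs_nonneg _)
    (abs_sqrtSqAddOneDeriv_le_one _)

theorem lipschitzWith_dmolProfile (m : ℝ) : LipschitzWith 1 (dmolProfile m) :=
  lipschitzWith_of_hasDerivAt_of_abs_le (hasDerivAt_dmolProfile m) (abs_dmolProfileDeriv_le_one m)

theorem lipschitzWith_dmolProfileDeriv (m : ℝ) : LipschitzWith 2 (dmolProfileDeriv m) := by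
  set g := fun r => sqrtSqAddOneDeriv (m - √(r ^ 2 + 1))
  have hg : LipschitzWith 1 g := by
    simpa [g, Function.comp_def] using lipschitzWith_sqrtSqAddOneDeriv.comp
      ((LipschitzWith.const m).sub lipschitzWith_sqrt_sq_add_one)
  refine LipschitzWith.of_dist_le_mul fun x y => ?_
  simp only [Real.dist_eq, NNReal.coe_ofNat]
  calc |dmolProfileDeriv m x - dmolProfileDeriv m y|
      = |g x * (sqrtSqAddOneDeriv x - sqrtSqAddOneDeriv y) +
          sqrtSqAddOneDeriv y * (g x - g y)| := by simp only [g, dmolProfileDeriv]; ring_nf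
    _ ≤ 1 * |x - y| + 1 * |x - y| := by
      refine (abs_add_le _ _).trans (add_le_add ?_ ?_) <;> rw [abs_mul] <;>
        refine mul_le_mul ?_ ?_ (abs_nonneg _) zero_le_one
      exacts [abs_sqrtSqAddOneDeriv_le_one _,
        by simpa using lipschitzWith_sqrtSqAddOneDeriv.abs_sub_le x y,
        abs_sqrtSqAddOneDeriv_le_one _, by simpa using hg.abs_sub_le x y]
    _ = 2 * |x - y| := by ring

theorem dtilde_le (L x : ℝ) (k : ℤ) : dtilde L x ≤ |x - L * k| :=
  csInf_le ⟨0, by rintro r ⟨k, rfl⟩; positivity⟩ ⟨k, rfl⟩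

theorem le_dtilde {L x a : ℝ} (h : ∀ k : ℤ, a ≤ |x - L * k|) : a ≤ dtilde L x :=
  le_csInf ⟨_, 0, rfl⟩ (by rintro r ⟨k, rfl⟩; exact h k)

theorem dtilde_eq_abs {L x : ℝ} (hL : 0 < L) (hx : |x| ≤ L / 2) : dtilde L x = |x| := by
  refine le_antisymm (by simpa using dtilde_le L x 0) (le_dtilde fun k => ?_)
  rcases eq_or_ne k 0 with rfl | hk
  · simp
  · have hk : (1 : ℝ) ≤ |(k : ℝ)| := by exact_mod_cast Int.one_le_abs hk
    have := abs_sub_abs_le_abs_sub (L * k) x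
    rw [abs_sub_comm, abs_mul, abs_of_pos hL] at this
    nlinarith

theorem dtilde_neg (L x : ℝ) : dtilde L (-x) = dtilde L x :=
  le_antisymm
    (le_dtilde fun k => (dtilde_le L (-x) (-k)).trans_eq <| by
      rw [← abs_neg]; push_cast; ring_nf)
    (le_dtilde fun k => (dtilde_le L x (-k)).trans_eq <| by
      rw [← abs_neg]; push_cast; ring_nf)

theorem dtilde_periodic (L : ℝ) : Periodic (dtilde L) L := fun x =>
  le_antisymm
    (le_dtilde fun k => (dtilde_le L (x + L) (k + 1)).trans_eq <| by push_cast; ring_nf)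
    (le_dtilde fun k => (dtilde_le L x (k - 1)).trans_eq <| by push_cast; ring_nf)

theorem lipschitzWith_dtilde (L : ℝ) : LipschitzWith 1 (dtilde L) :=
  LipschitzWith.of_le_add fun x y => by
    rw [← sub_le_iff_le_add, Real.dist_eq]
    exact le_dtilde fun k => by linarith [dtilde_le L x k, abs_sub_le x y (L * k)]

theorem dmol_eq_dmolProfile (L x : ℝ) :
    dmol L x = dmolProfile √(L ^ 2 / 4 + 1) (dtilde L x) := rfl

theorem dmol_periodic (L : ℝ) : Periodic (dmol L) L := fun x => by
  rw [dmol_eq_dmolProfile, dmol_eq_dmolProfile, dtilde_periodic]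

theorem dmol_even (L : ℝ) : Function.Even (dmol L) := fun x => by
  rw [dmol_eq_dmolProfile, dmol_eq_dmolProfile, dtilde_neg]

theorem dmol_eq_dmolProfile_of_abs_le {L x : ℝ} (hL : 0 < L) (hx : |x| ≤ L / 2) :
    dmol L x = dmolProfile √(L ^ 2 / 4 + 1) x := by
  rw [dmol_eq_dmolProfile, dtilde_eq_abs hL hx]
  rcases abs_choice x with h | h <;> rw [h]
  exact dmolProfile_neg _ x

theorem lipschitzWith_dmol (L : ℝ) : LipschitzWith 1 (dmol L) := by
  have h := (lipschitzWith_dmolProfile √(L ^ 2 / 4 + 1)).comp (lipschitzWith_dtilde L)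
  rwa [mul_one] at h

theorem dmolProfileDeriv_half (L : ℝ) : dmolProfileDeriv √(L ^ 2 / 4 + 1) (L / 2) = 0 := by
  rw [dmolProfileDeriv, div_pow, show (2 : ℝ) ^ 2 = 4 by norm_num, sub_self, sqrtSqAddOneDeriv,
    zero_div, zero_mul]

theorem abs_dmol_second_diff_le_of_mem_Icc {L t h : ℝ} (hL : 0 < L) (ht : t ∈ Icc 0 (L / 2))
    (hh : h ∈ Icc 0 (L / 2)) :
    |dmol L (t + h) - 2 * dmol L t + dmol L (t - h)| ≤ 8 * h ^ 2 := by
  obtain ⟨ht₀, ht₁⟩ := ht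
  obtain ⟨hh₀, hh₁⟩ := hh
  have hF := abs_second_diff_le_of_lipschitzWith (hasDerivAt_dmolProfile √(L ^ 2 / 4 + 1))
    (lipschitzWith_dmolProfileDeriv _) t h
  rw [dmol_eq_dmolProfile_of_abs_le (x := t) hL (abs_le.2 ⟨by linarith, ht₁⟩),
    dmol_eq_dmolProfile_of_abs_le (x := t - h) hL (abs_le.2 ⟨by linarith, by linarith⟩)]
  rcases le_or_gt (t + h) (L / 2) with hc | hc
  · rw [dmol_eq_dmolProfile_of_abs_le hL (abs_le.2 ⟨by linarith, hc⟩)]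
    norm_num at hF
    nlinarith
  -- Beyond `L / 2` the periodic distance folds back, which costs nothing to second order
  -- because the profile is flat at `L / 2`.
  have hfold : dmol L (t + h) = dmolProfile √(L ^ 2 / 4 + 1) (L / 2 - (t + h - L / 2)) := by
    rw [← (dmol_periodic L).sub_eq,
      dmol_eq_dmolProfile_of_abs_le hL (abs_le.2 ⟨by linarith, by linarith⟩), ← dmolProfile_neg]
    congr 1
    ring
  have hR := abs_sub_reflect_le_of_lipschitzWith (hasDerivAt_dmolProfile _)
    (lipschitzWith_dmolProfileDeriv _) (dmolProfileDeriv_half L) (t + h - L / 2)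
  rw [show L / 2 + (t + h - L / 2) = t + h by ring] at hR
  have hu : (t + h - L / 2) ^ 2 ≤ h ^ 2 := by nlinarith
  rw [hfold, abs_le]
  rw [abs_le] at hF hR
  norm_num at hF hR
  constructor <;> linarith [hF.1, hF.2, hR.1, hR.2]

theorem abs_dmol_second_diff_le {L h : ℝ} (hL : 0 < L) (hh : h ∈ Icc 0 L) (t : ℝ) :
    |dmol L (t + h) - 2 * dmol L t + dmol L (t - h)| ≤ 8 * h ^ 2 := by
  obtain ⟨hh₀, hhL⟩ := hh
  set S := fun s => dmol L (s + h) - 2 * dmol L s + dmol L (s - h)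
  have hS : Periodic S L := fun s => by
    simp only [S, add_right_comm s L, add_sub_right_comm s L, dmol_periodic L _]
  have hSeven : Function.Even S := fun s => by
    simp only [S, show -s + h = -(s - h) by ring, show -s - h = -(s + h) by ring, dmol_even L _]
    ring
  obtain ⟨s, hs, hts⟩ := hS.exists_mem_Icc_half hSeven hL t
  change |S t| ≤ _
  rw [hts]
  rcases le_or_gt h (L / 2) with hh | hh
  · exact abs_dmol_second_diff_le_of_mem_Icc hL hs ⟨hh₀, hh⟩
  -- A step `h > L / 2` is the same as the step `L - h` by periodicity.
  have hS' : S s = dmol L (s + (L - h)) - 2 * dmol L s + dmol L (s - (L - h)) := by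
    simp only [S]
    rw [← dmol_periodic L (s - (L - h)), ← (dmol_periodic L).sub_eq (s + (L - h))]
    ring_nf
  rw [hS']
  refine (abs_dmol_second_diff_le_of_mem_Icc hL hs ⟨by linarith, by linarith⟩).trans ?_
  nlinarith

/-- bound on the second-order difference of the exponential weight. -/
theorem stmt_3 :
    ∃ C > (0 : ℝ),
      ∀ (L : ℝ) (N : ℕ) [NeZero N], 1 ≤ L → L / N ≤ 1 →
      ∀ γ : ℝ, 0 < γ → ∀ i j : ZMod N,
        |(Real.exp (-γ * dL L (gridX L N i + L / N) (gridX L N j)) -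
              2 * Real.exp (-γ * dL L (gridX L N i) (gridX L N j)) +
              Real.exp (-γ * dL L (gridX L N i - L / N) (gridX L N j))) / (L / N) ^ 2| ≤
          C * (γ ^ 2 + 2 * γ) * Real.exp (γ * (L / N)) *
            Real.exp (-γ * dL L (gridX L N i) (gridX L N j)) := by
  refine ⟨4, by norm_num, fun L N _ hL _ γ hγ i j => ?_⟩
  have hL₀ : 0 < L := by linarith
  have hδ : 0 < L / N := div_pos hL₀ (Nat.cast_pos.2 (NeZero.pos N))
  have hδL : L / N ≤ L := div_le_self hL₀.le (Nat.one_le_cast.2 NeZero.one_le)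
  have h := abs_exp_second_diff_le (lipschitzWith_dmol L) hγ.le hδ
    (abs_dmol_second_diff_le hL₀ ⟨hδ.le, hδL⟩ (gridX L N i - gridX L N j))
  simp only [dL, add_sub_right_comm _ (L / N), sub_right_comm _ (L / N)]
  refine h.trans (mul_le_mul_of_nonneg_right ?_ (exp_pos _).le)
  nlinarith [one_le_exp (by positivity : 0 ≤ γ * (L / N))]
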